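/- arXiv:1702.05387 — 2 statements merged into one kernel-verified Lean document; each statement's English description precedes it below -/
import Mathlib

section
/- Let f : ℝ → ℝ be continuous with f(t) = 0 for t ≤ 0 and f(t) > 0 for t > 0, such that t ↦ f(t)/t³ is strictly increasing on (0,∞). Define F(t) = ∫₀ᵗ f(s) ds. Then for every t > 0, 0 < 4·F(t) < f(t)·t. -/
/-- If `f` is continuous, vanishes on `(−∞,0]`, is positive on `(0,∞)`, and
`t ↦ f t / t³` is strictly increasing on `(0,∞)`, then with `F t = ∫ s in 0..t, f s`
one has `0 < 4·F t < f t · t` for every `t > 0`. -/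
theorem stmt_1 (f : ℝ → ℝ)
    (hcont : Continuous f)
    (hzero : ∀ t ≤ (0:ℝ), f t = 0)
    (hpos : ∀ t > (0:ℝ), 0 < f t)
    (hmono : StrictMonoOn (fun t => f t / t ^ 3) (Set.Ioi 0)) :
    ∀ t > (0:ℝ), 0 < 4 * (∫ s in (0:ℝ)..t, f s) ∧
      4 * (∫ s in (0:ℝ)..t, f s) < f t * t := by
  intro t ht
  have hfi : IntervalIntegrable f MeasureTheory.volume 0 t :=
    hcont.intervalIntegrable 0 t
  have hFpos : 0 < ∫ s in (0:ℝ)..t, f s := by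
    apply intervalIntegral.intervalIntegral_pos_of_pos_on hfi
    · intro x hx; exact hpos x hx.1
    · exact ht
  refine ⟨by linarith, ?_⟩
  -- compare with g s = f t / t^3 * s^3
  set g : ℝ → ℝ := fun s => f t / t ^ 3 * s ^ 3 with hg
  have hgi : IntervalIntegrable g MeasureTheory.volume 0 t := by
    apply Continuous.intervalIntegrable; continuity
  have hlt : ∫ s in (0:ℝ)..t, f s < ∫ s in (0:ℝ)..t, g s := by
    have hdiff : 0 < ∫ s in (0:ℝ)..t, (g s - f s) := by
      apply intervalIntegral.intervalIntegral_pos_of_pos_on (hgi.sub hfi)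
      · intro x hx
        have hx0 : (0:ℝ) < x := hx.1
        have := hmono (Set.mem_Ioi.2 hx0) (Set.mem_Ioi.2 ht) hx.2
        have hx3 : (0:ℝ) < x ^ 3 := by positivity
        have : f x / x ^ 3 * x ^ 3 < f t / t ^ 3 * x ^ 3 := by
          exact mul_lt_mul_of_pos_right this hx3
        rw [div_mul_cancel₀ _ (ne_of_gt hx3)] at this
        simpa [hg] using sub_pos.2 this
      · exact ht
    have := intervalIntegral.integral_sub hgi hfi
    rw [this] at hdiff
    linarith
  have hcalc : ∫ s in (0:ℝ)..t, g s = f t * t / 4 := by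
    rw [hg]
    rw [intervalIntegral.integral_const_mul]
    rw [integral_pow]
    have ht0 : t ≠ 0 := ne_of_gt ht
    field_simp
    ring
  rw [hcalc] at hlt
  linarith
end

section
/- Let f : ℝ → ℝ be C¹ with f(t) = 0 for t ≤ 0 and f(t) > 0 for t > 0, such that t ↦ f(t)/t³ is strictly increasing on (0,∞). Define F(t) = ∫₀ᵗ f(s) ds. Then the function t ↦ (1/4)·f(t)·t − F(t) is strictly increasing on (0,∞). -/
open intervalIntegral Set

/-- If `f` is `C¹`, vanishes on `(−∞,0]`, is positive on `(0,∞)`, and `t ↦ f t / t³`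
is strictly increasing on `(0,∞)`, then `t ↦ (1/4)·f t·t − F t` is strictly increasing
on `(0,∞)`, where `F t = ∫ s in 0..t, f s`. -/
theorem stmt_2 (f : ℝ → ℝ)
    (hf : ContDiff ℝ 1 f)
    (hzero : ∀ t ≤ (0:ℝ), f t = 0)
    (hpos : ∀ t > (0:ℝ), 0 < f t)
    (hmono : StrictMonoOn (fun t => f t / t ^ 3) (Set.Ioi 0)) :
    StrictMonoOn (fun t => (1/4) * f t * t - ∫ s in (0:ℝ)..t, f s) (Set.Ioi 0) := by
  intro a ha b hb hab
  simp only [Set.mem_Ioi] at ha hb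
  have hfc : Continuous f := hf.continuous
  have hb3 : (0:ℝ) < b ^ 3 := by positivity
  -- key integral inequality
  have hint : (∫ s in a..b, f s) < ∫ s in a..b, (f b / b ^ 3) * s ^ 3 := by
    apply integral_lt_integral_of_continuousOn_of_le_of_exists_lt hab
      hfc.continuousOn (by fun_prop)
    · intro x hx
      have hx0 : 0 < x := lt_trans ha hx.1
      rcases eq_or_lt_of_le hx.2 with h | h
      · subst h; exact le_of_eq (by field_simp)
      · have := hmono (Set.mem_Ioi.2 hx0) (Set.mem_Ioi.2 hb) h
        have hx3 : (0:ℝ) < x ^ 3 := by positivity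
        calc f x = (f x / x ^ 3) * x ^ 3 := by field_simp
          _ ≤ (f b / b ^ 3) * x ^ 3 := by nlinarith
          _ = f b / b ^ 3 * x ^ 3 := rfl
    · refine ⟨a, ⟨le_refl a, hab.le⟩, ?_⟩
      have := hmono (Set.mem_Ioi.2 ha) (Set.mem_Ioi.2 hb) hab
      have ha3 : (0:ℝ) < a ^ 3 := by positivity
      calc f a = (f a / a ^ 3) * a ^ 3 := by field_simp
        _ < (f b / b ^ 3) * a ^ 3 := by nlinarith
  have hrhs : (∫ s in a..b, (f b / b ^ 3) * s ^ 3) = f b / b ^ 3 * ((b ^ 4 - a ^ 4) / 4) := by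
    rw [intervalIntegral.integral_const_mul, integral_pow]; norm_num
  have hsplit : (∫ s in (0:ℝ)..b, f s) = (∫ s in (0:ℝ)..a, f s) + ∫ s in a..b, f s := by
    rw [intervalIntegral.integral_add_adjacent_intervals] <;>
      exact hfc.intervalIntegrable _ _
  have hfa : f a * a < a ^ 4 * (f b / b ^ 3) := by
    have h2 : f a / a ^ 3 < f b / b ^ 3 := hmono (Set.mem_Ioi.2 ha) (Set.mem_Ioi.2 hb) hab
    have ha3 : (0:ℝ) < a ^ 3 := by positivity
    have h1 : f a = (f a / a ^ 3) * a ^ 3 := by field_simp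
    nlinarith [mul_lt_mul_of_pos_left h2 (show (0:ℝ) < a ^ 4 by positivity)]
  have hfb : f b = (f b / b ^ 3) * b ^ 3 := by field_simp
  simp only
  rw [hsplit]
  nlinarith [hint, hrhs]
end
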